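/- With notation as in the recursive construction of Φ_Γ : G_Γ → G'_Γ induced by set maps f_i : G_i → G'_i, the restriction of Φ_Γ to the kernel K_Γ = ker(G_Γ → ∏ G_i) is a group homomorphism into K'_Γ = ker(G'_Γ → ∏ G'_i). -/

import Mathlib

/-!
`Φ` is the left component of a homomorphism `G_Γ → G'_Γ ≀ᵣ ∏ G i` (regular wreath product)
sending `a ∈ G i` to `(g ↦ f i (g i)⁻¹ · f i (g i · a), a)`, read off at the identity. The
relations of `G_Γ` are respected because syllables at adjacent vertices change disjoint
coordinates of `g`. On `K_Γ` the `∏ G i`-component vanishes, so the wreath multiplication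
becomes pointwise there and evaluation at the identity is a homomorphism; its image lies in
`K'_Γ` because the image of `Φ w` in `∏ G' i` telescopes to `f(1)⁻¹ f(π w)`.
-/

open Monoid
open scoped commutatorElement

namespace GPaper

variable {ι : Type*}

/-- The relator subgroup of the graph product: normal closure of commutators of
elements of vertex groups at adjacent vertices. -/
def Rels (Γ : SimpleGraph ι) (G : ι → Type*) [∀ i, Group (G i)] : Subgroup (Monoid.CoprodI G) :=
  Subgroup.normalClosure
    { x | ∃ (i j : ι) (g : G i) (h : G j), Γ.Adj i j ∧
          x = ⁅Monoid.CoprodI.of g, Monoid.CoprodI.of h⁆ }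

instance (Γ : SimpleGraph ι) (G : ι → Type*) [∀ i, Group (G i)] : (Rels Γ G).Normal :=
  Subgroup.normalClosure_normal

/-- The graph product of the groups `G i` over the simplicial graph `Γ`. -/
abbrev GP (Γ : SimpleGraph ι) (G : ι → Type*) [∀ i, Group (G i)] :=
  Monoid.CoprodI G ⧸ Rels Γ G

/-- The canonical inclusion of a vertex group into the graph product. -/
def of (Γ : SimpleGraph ι) (G : ι → Type*) [∀ i, Group (G i)] (i : ι) : G i →* GP Γ G :=
  (QuotientGroup.mk' (Rels Γ G)).comp Monoid.CoprodI.of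

/-- The canonical homomorphism from the graph product to the direct product. -/
def proj [DecidableEq ι] (Γ : SimpleGraph ι) (G : ι → Type*) [∀ i, Group (G i)] :
    GP Γ G →* (∀ i, G i) :=
  QuotientGroup.lift (Rels Γ G) (Monoid.CoprodI.lift (fun i => MonoidHom.mulSingle G i)) (by
    intro x hx
    refine Subgroup.normalClosure_le_normal ?_ hx
    rintro y ⟨i, j, g, h, hadj, rfl⟩
    have hij : i ≠ j := hadj.ne
    simp only [SetLike.mem_coe, MonoidHom.mem_ker, map_commutatorElement,
      Monoid.CoprodI.lift_of]
    rw [commutatorElement_eq_one_iff_commute]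
    exact Pi.mulSingle_commute hij g h)

/-- The canonical epimorphism `G_Γ → G_Γ'` when `Γ'` is obtained from `Γ` by adding edges. -/
def mapGraph (Γ Γ' : SimpleGraph ι) (hΓ : Γ ≤ Γ') (G : ι → Type*) [∀ i, Group (G i)] :
    GP Γ G →* GP Γ' G :=
  QuotientGroup.lift (Rels Γ G) (QuotientGroup.mk' (Rels Γ' G)) (by
    intro x hx
    rw [QuotientGroup.ker_mk']
    refine Subgroup.normalClosure_le_normal ?_ hx
    rintro y ⟨i, j, g, h, hadj, rfl⟩
    exact Subgroup.subset_normalClosure ⟨i, j, g, h, hΓ hadj, rfl⟩)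

/-- The element of the graph product represented by a word (list of syllables). -/
def wordProd (Γ : SimpleGraph ι) (G : ι → Type*) [∀ i, Group (G i)]
    (w : List (Σ i, G i)) : GP Γ G :=
  (w.map fun s => of Γ G s.1 s.2).prod

/-- The image of a word in the direct product of the vertex groups. -/
def piProd [DecidableEq ι] (G : ι → Type*) [∀ i, Group (G i)]
    (w : List (Σ i, G i)) : ∀ i, G i :=
  (w.map fun s => Pi.mulSingle s.1 s.2).prod

/-- The ordered product of those syllables of a word that belong to `G i`. -/
def sylProd [DecidableEq ι] (G : ι → Type*) [∀ i, Group (G i)]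
    (w : List (Σ i, G i)) (i : ι) : G i :=
  (w.filterMap fun s => if h : s.1 = i then some (cast (congrArg G h) s.2) else none).prod

/-- The normal (syllable) length of an element of a graph product:
the minimal number of syllables in a word representing it. -/
noncomputable def nl (Γ : SimpleGraph ι) (G : ι → Type*) [∀ i, Group (G i)]
    (g : GP Γ G) : ℕ :=
  sInf { n | ∃ w : List (Σ i, G i), wordProd Γ G w = g ∧ w.length = n }

section Phi

open scoped Classical

variable [DecidableEq ι] {G G' : ι → Type*} [∀ i, Group (G i)] [∀ i, Group (G' i)]

/-- One step of the recursive construction of `Φ`: the new syllable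
`f(π(w))⁻¹ · f(π(w)s)` (dropped if trivial), where `g = π(w)`. -/
noncomputable def phiStep (f : ∀ i, G i → G' i) (g : ∀ i, G i) (s : Σ i, G i) : List (Σ i, G' i) :=
  if (f s.1 (g s.1))⁻¹ * f s.1 (g s.1 * s.2) = 1 then []
  else [⟨s.1, (f s.1 (g s.1))⁻¹ * f s.1 (g s.1 * s.2)⟩]

/-- Auxiliary recursion: process the word left to right, carrying the
image `g` of the prefix in the direct product. -/
noncomputable def phiAux (f : ∀ i, G i → G' i) : (∀ i, G i) → List (Σ i, G i) → List (Σ i, G' i)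
  | _, [] => []
  | g, s :: w => phiStep f g s ++ phiAux f (g * Pi.mulSingle s.1 s.2) w

/-- The word map `Φ : S* → S'*` induced by the set maps `f i : G i → G' i`. -/
noncomputable def phiWord (f : ∀ i, G i → G' i) (w : List (Σ i, G i)) : List (Σ i, G' i) :=
  phiAux f 1 w

end Phi

def _root_.RegularWreathProduct.leftOfKerRightHom {D Q : Type*} [Group D] [Group Q] :
    (RegularWreathProduct.rightHom : D ≀ᵣ Q →* Q).ker →* (Q → D) where
  toFun a := a.1.left
  map_one' := rfl
  map_mul' a b := by
    have ha : a.1.right = 1 := a.2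
    ext x
    simp [ha]

section Words

variable {Γ : SimpleGraph ι} {G : ι → Type*} [∀ i, Group (G i)]

lemma of_commute_of_adj {i j : ι} (h : Γ.Adj i j) (a : G i) (b : G j) :
    Commute (of Γ G i a) (of Γ G j b) := by
  have hrel : (QuotientGroup.mk' (Rels Γ G)) ⁅Monoid.CoprodI.of a, Monoid.CoprodI.of b⁆ = 1 :=
    (QuotientGroup.eq_one_iff _).2 (Subgroup.subset_normalClosure ⟨i, j, a, b, h, rfl⟩)
  rw [map_commutatorElement] at hrel
  exact commutatorElement_eq_one_iff_commute.mp hrel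

lemma wordProd_cons (s : Σ i, G i) (w : List (Σ i, G i)) :
    wordProd Γ G (s :: w) = of Γ G s.1 s.2 * wordProd Γ G w := by
  simp [wordProd]

lemma wordProd_append (u v : List (Σ i, G i)) :
    wordProd Γ G (u ++ v) = wordProd Γ G u * wordProd Γ G v := by
  simp [wordProd]

lemma wordProd_surjective : Function.Surjective (wordProd Γ G) := by
  intro x
  induction x using QuotientGroup.induction_on with | _ y =>
  induction y using Monoid.CoprodI.induction_on with
  | one => exact ⟨[], rfl⟩
  | of i a => exact ⟨[⟨i, a⟩], by simp [wordProd]; rfl⟩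
  | mul a b ha hb =>
    obtain ⟨u, hu⟩ := ha
    obtain ⟨v, hv⟩ := hb
    exact ⟨u ++ v, by rw [wordProd_append, hu, hv]; rfl⟩

variable [DecidableEq ι]

lemma piProd_cons (s : Σ i, G i) (w : List (Σ i, G i)) :
    piProd G (s :: w) = Pi.mulSingle s.1 s.2 * piProd G w := by
  simp [piProd]

lemma piProd_append (u v : List (Σ i, G i)) :
    piProd G (u ++ v) = piProd G u * piProd G v := by
  simp [piProd]

lemma proj_of (i : ι) (a : G i) : proj Γ G (of Γ G i a) = Pi.mulSingle i a := by
  simp [proj, of, MonoidHom.mulSingle]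
  rfl

lemma proj_wordProd (w : List (Σ i, G i)) : proj Γ G (wordProd Γ G w) = piProd G w := by
  induction w with
  | nil => rfl
  | cons s w ih => rw [wordProd_cons, map_mul, ih, proj_of, piProd_cons]

end Words

section PhiWord

variable {G G' : ι → Type*} [∀ i, Group (G i)] [∀ i, Group (G' i)]
  (f : ∀ i, G i → G' i)

lemma wordProd_phiStep (Γ : SimpleGraph ι) (g : ∀ i, G i) (s : Σ i, G i) :
    wordProd Γ G' (phiStep f g s) = of Γ G' s.1 ((f s.1 (g s.1))⁻¹ * f s.1 (g s.1 * s.2)) := by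
  unfold phiStep
  split_ifs with h
  · rw [h, map_one]; rfl
  · simp [wordProd]

variable [DecidableEq ι]

lemma phiAux_cons (g : ∀ i, G i) (s : Σ i, G i) (w : List (Σ i, G i)) :
    phiAux f g (s :: w) = phiStep f g s ++ phiAux f (g * Pi.mulSingle s.1 s.2) w :=
  rfl

lemma piProd_phiStep (g : ∀ i, G i) (s : Σ i, G i) :
    piProd G' (phiStep f g s) = Pi.mulSingle s.1 ((f s.1 (g s.1))⁻¹ * f s.1 (g s.1 * s.2)) := by
  unfold phiStep
  split_ifs with h
  · rw [h, Pi.mulSingle_one]; rfl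
  · simp [piProd]

lemma piProd_phiAux (g : ∀ i, G i) (w : List (Σ i, G i)) :
    piProd G' (phiAux f g w) = fun i => (f i (g i))⁻¹ * f i (g i * piProd G w i) := by
  induction w generalizing g with
  | nil => funext i; simp [phiAux, piProd]
  | cons s w ih =>
    rw [phiAux_cons, piProd_append, piProd_phiStep, ih]
    funext i
    obtain ⟨j, a⟩ := s
    rcases eq_or_ne j i with rfl | hji
    · simp only [Pi.mul_apply, Pi.mulSingle_eq_same, piProd_cons, mul_assoc, mul_inv_cancel_left]
    · simp [Pi.mulSingle_eq_of_ne' hji, piProd_cons]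

lemma piProd_phiWord_eq_one {w : List (Σ i, G i)} (hw : piProd G w = 1) :
    piProd G' (phiWord f w) = 1 := by
  funext i
  simp [phiWord, piProd_phiAux, hw]

end PhiWord

section PhiHom

variable [DecidableEq ι] (Γ : SimpleGraph ι) {G G' : ι → Type*} [∀ i, Group (G i)]
  [∀ i, Group (G' i)] (f : ∀ i, G i → G' i)

/-- At `g⁻¹` the left component is the syllable that `Φ` writes for `a` after a prefix with
image `g` in `∏ G i`; the inverse comes from the left-translation convention of `≀ᵣ`. -/
def phiVertexHom (i : ι) : G i →* GP Γ G' ≀ᵣ (∀ i, G i) where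
  toFun a := ⟨fun g => of Γ G' i ((f i (g⁻¹ i))⁻¹ * f i (g⁻¹ i * a)), Pi.mulSingle i a⟩
  map_one' := by ext g <;> simp
  map_mul' a b := by
    refine RegularWreathProduct.ext (funext fun g => ?_) (Pi.mulSingle_mul i a b)
    simp only [RegularWreathProduct.mul_left, Pi.mul_apply, mul_inv_rev, inv_inv,
      Pi.mulSingle_eq_same, ← map_mul]
    congr 1
    group

lemma phiVertexHom_commute {i j : ι} (h : Γ.Adj i j) (a : G i) (b : G j) :
    Commute (phiVertexHom Γ f i a) (phiVertexHom Γ f j b) := by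
  have hij : i ≠ j := h.ne
  refine RegularWreathProduct.ext (funext fun g => ?_) (Pi.mulSingle_commute hij a b)
  simp only [phiVertexHom, MonoidHom.coe_mk, OneHom.coe_mk, RegularWreathProduct.mul_left,
    Pi.mul_apply, mul_inv_rev, inv_inv, Pi.mulSingle_eq_of_ne hij, Pi.mulSingle_eq_of_ne hij.symm,
    mul_one]
  exact of_commute_of_adj h _ _

def phiHom : GP Γ G →* GP Γ G' ≀ᵣ (∀ i, G i) :=
  QuotientGroup.lift (Rels Γ G) (Monoid.CoprodI.lift (phiVertexHom Γ f)) (by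
    intro x hx
    refine Subgroup.normalClosure_le_normal ?_ hx
    rintro y ⟨i, j, a, b, hadj, rfl⟩
    rw [SetLike.mem_coe, MonoidHom.mem_ker, map_commutatorElement, Monoid.CoprodI.lift_of,
      Monoid.CoprodI.lift_of, commutatorElement_eq_one_iff_commute]
    exact phiVertexHom_commute Γ f hadj a b)

lemma phiHom_of (i : ι) (a : G i) : phiHom Γ f (of Γ G i a) = phiVertexHom Γ f i a := by
  simp [phiHom, of]

lemma rightHom_comp_phiHom : RegularWreathProduct.rightHom.comp (phiHom Γ f) = proj Γ G := by
  refine QuotientGroup.monoidHom_ext _ (Monoid.CoprodI.ext_hom _ _ fun i => ?_)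
  ext a : 1
  show (phiHom Γ f (of Γ G i a)).right = proj Γ G (of Γ G i a)
  rw [phiHom_of, proj_of]
  rfl

lemma phiHom_wordProd_left (w : List (Σ i, G i)) (g : ∀ i, G i) :
    (phiHom Γ f (wordProd Γ G w)).left g⁻¹ = wordProd Γ G' (phiAux f g w) := by
  induction w generalizing g with
  | nil => rfl
  | cons s w ih =>
    rw [wordProd_cons, map_mul, phiHom_of, phiAux_cons, wordProd_append, wordProd_phiStep,
      ← ih, RegularWreathProduct.mul_left, Pi.mul_apply, ← mul_inv_rev]
    simp [phiVertexHom]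

end PhiHom

theorem stmt3_general {ι : Type*} [DecidableEq ι] (Γ : SimpleGraph ι)
    (G G' : ι → Type*) [∀ i, Group (G i)] [∀ i, Group (G' i)]
    (f : ∀ i, G i → G' i) :
    ∃ Φ : (proj Γ G).ker →* (proj Γ G').ker,
      ∀ (w : List (Σ i, G i)) (hw : wordProd Γ G w ∈ (proj Γ G).ker),
        (Φ ⟨wordProd Γ G w, hw⟩ : GP Γ G') = wordProd Γ G' (phiWord f w) := by
  have hker : (proj Γ G).ker = RegularWreathProduct.rightHom.ker.comap (phiHom Γ f) := by
    rw [MonoidHom.comap_ker, rightHom_comp_phiHom]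
  let Ψ : (proj Γ G).ker →* GP Γ G' :=
    (Pi.evalMonoidHom _ 1).comp (RegularWreathProduct.leftOfKerRightHom.comp
      (((phiHom Γ f).subgroupComap _).comp (Subgroup.inclusion hker.le)))
  have hΨ (w : List (Σ i, G i)) (hw : wordProd Γ G w ∈ (proj Γ G).ker) :
      Ψ ⟨wordProd Γ G w, hw⟩ = wordProd Γ G' (phiWord f w) := by
    have h := phiHom_wordProd_left Γ f w 1
    rw [inv_one] at h
    exact h
  refine ⟨Ψ.codRestrict _ fun ⟨x, hx⟩ => ?_, hΨ⟩
  obtain ⟨w, rfl⟩ := wordProd_surjective x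
  rw [hΨ, MonoidHom.mem_ker, proj_wordProd]
  exact piProd_phiWord_eq_one f (by rwa [MonoidHom.mem_ker, proj_wordProd] at hx)

/-- The word map `Φ` induces a group homomorphism from the kernel
`K_Γ = ker(G_Γ → ∏ G i)` into `K'_Γ = ker(G'_Γ → ∏ G' i)`, given on (the class of) a
word `w ∈ K_Γ` by the word `phiWord f w`. -/
theorem stmt3 {ι : Type*} [DecidableEq ι] [Fintype ι] (Γ : SimpleGraph ι)
    (G G' : ι → Type*) [∀ i, Group (G i)] [∀ i, Group (G' i)]
    (f : ∀ i, G i → G' i) :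
    ∃ Φ : (proj Γ G).ker →* (proj Γ G').ker,
      ∀ (w : List (Σ i, G i)) (hw : wordProd Γ G w ∈ (proj Γ G).ker),
        (Φ ⟨wordProd Γ G w, hw⟩ : GP Γ G') = wordProd Γ G' (phiWord f w) :=
  stmt3_general Γ G G' f

end GPaper
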